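/- For 1 ≤ p < ∞, the sequences (b^(k))_{k∈ℕ}, where b^(k)_n = B_{nk}, form a Schauder basis of ℓ_p(P̂): for every x ∈ ℓ_p(P̂), setting μ_k = (P̂x)_k, the partial sums x^[r] = Σ_{k=0}^{r} μ_k b^(k) satisfy ‖x − x^[r]‖_{ℓ_p(P̂)} → 0 as r → ∞, and this representation is unique: if also ‖x − Σ_{k=0}^{r} η_k b^(k)‖_{ℓ_p(P̂)} → 0 for scalars (η_k), then η_k = μ_k for every k. -/

import Mathlib

open Finset Filter Topology

/-- The Pascal fractional difference matrix `P̂ = P̂(τ)`. -/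
noncomputable def Phat (τ : ℝ) (n k : ℕ) : ℝ :=
  if k ≤ n then
    ∑ i ∈ Finset.Icc k n,
      (-1 : ℝ) ^ (i - k) * (n.choose (n - i)) * Real.Gamma (τ + 1) /
        (((i - k).factorial : ℝ) * Real.Gamma (τ - i + k + 1))
  else 0

/-- The matrix `B = B(τ)` (the inverse of `P̂`). -/
noncomputable def Bmat (τ : ℝ) (n k : ℕ) : ℝ :=
  if k ≤ n then
    ∑ j ∈ Finset.Icc k n,
      (-1 : ℝ) ^ (n - k) * (j.choose (j - k)) * Real.Gamma (-τ + 1) /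
        (((n - j).factorial : ℝ) * Real.Gamma (-τ - n + j + 1))
  else 0

/-- The `P̂`-transform of a sequence `x`: `(P̂x)_n = Σ_{k=0}^n P̂_{nk} x_k`. -/
noncomputable def PhatT (τ : ℝ) (x : ℕ → ℝ) (n : ℕ) : ℝ :=
  ∑ k ∈ Finset.range (n + 1), Phat τ n k * x k

/-- The space `ℓ_p(P̂)`: sequences whose `P̂`-transform is in `ℓ_p`. -/
def lpPhatSet (τ p : ℝ) : Set (ℕ → ℝ) :=
  {x | Summable fun n => |PhatT τ x n| ^ p}

/-- The norm of `ℓ_p(P̂)`. -/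
noncomputable def lpPhatNorm (τ p : ℝ) (x : ℕ → ℝ) : ℝ :=
  (∑' n, |PhatT τ x n| ^ p) ^ (1 / p)


noncomputable def bin (a : ℝ) : ℕ → ℝ
  | 0 => 1
  | m + 1 => bin a m * (a - m) / (m + 1)

lemma bin_zero (a : ℝ) : bin a 0 = 1 := rfl
lemma bin_succ (a : ℝ) (m : ℕ) : bin a (m + 1) = bin a m * (a - m) / (m + 1) := rfl

lemma bin_absorb (a : ℝ) (m : ℕ) : ((m : ℝ) + 1) * bin a (m + 1) = a * bin (a - 1) m := by
  induction m with
  | zero => simp [bin]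
  | succ m ih =>
      have h1 : ((m : ℝ) + 1) ≠ 0 := by positivity
      have hb : bin a (m + 1) = a * bin (a - 1) m / ((m : ℝ) + 1) := by
        rw [← ih, mul_div_cancel_left₀ _ h1]
      rw [bin_succ a (m + 1), bin_succ (a - 1) m, hb]
      push_cast
      field_simp
      ring

lemma bin_eq_absorb (a : ℝ) (m : ℕ) : bin a (m + 1) = a * bin (a - 1) m / ((m : ℝ) + 1) := by
  have h1 : ((m : ℝ) + 1) ≠ 0 := by positivity
  rw [← bin_absorb, mul_div_cancel_left₀ _ h1]

lemma bin_pascal (a : ℝ) (m : ℕ) : bin a (m + 1) = bin (a - 1) (m + 1) + bin (a - 1) m := by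
  have h1 : ((m : ℝ) + 1) ≠ 0 := by positivity
  rw [bin_eq_absorb, bin_succ (a - 1) m]
  field_simp
  ring

noncomputable def Fv (a : ℝ) (r : ℕ) : ℝ := ∑ m ∈ Finset.range (r + 1), bin a m * bin (-a) (r - m)
noncomputable def Gv (a : ℝ) (s : ℕ) : ℝ := ∑ m ∈ Finset.range (s + 1), bin a m * bin (-1 - a) (s - m)

lemma Gv_zero (a : ℝ) : Gv a 0 = 1 := by simp [Gv, bin]

lemma Grec1 (a : ℝ) (s : ℕ) : Fv (a + 1) (s + 1) = Gv a (s + 1) + Gv a s := by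
  have h : Fv (a + 1) (s + 1)
      = ∑ m ∈ Finset.range (s + 1), bin (a + 1) (m + 1) * bin (-(a + 1)) (s - m)
        + bin (a + 1) 0 * bin (-(a + 1)) (s + 1) := by
    rw [Fv, Finset.sum_range_succ']
    simp [Nat.succ_sub_succ]
  rw [h]
  have hG : Gv a (s + 1)
      = ∑ m ∈ Finset.range (s + 1), bin a (m + 1) * bin (-1 - a) (s - m)
        + bin a 0 * bin (-1 - a) (s + 1) := by
    rw [Gv, Finset.sum_range_succ']
    simp [Nat.succ_sub_succ]
  rw [hG]
  have hpa : ∀ m : ℕ, bin (a + 1) (m + 1) = bin a (m + 1) + bin a m := by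
    intro m
    have := bin_pascal (a + 1) m
    simpa using this
  have hneg : (-(a + 1) : ℝ) = -1 - a := by ring
  rw [hneg]
  simp only [hpa, add_mul, Finset.sum_add_distrib]
  rw [bin_zero, bin_zero]
  rw [Gv]
  ring

lemma Grec2 (a : ℝ) (s : ℕ) : Fv a (s + 1) = Gv a (s + 1) + Gv a s := by
  have h : Fv a (s + 1)
      = ∑ m ∈ Finset.range (s + 1), bin a m * bin (-a) (s + 1 - m)
        + bin a (s + 1) * bin (-a) 0 := by
    rw [Fv, Finset.sum_range_succ]
    simp
  rw [h]
  have key : ∀ m ∈ Finset.range (s + 1),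
      bin a m * bin (-a) (s + 1 - m)
        = bin a m * bin (-1 - a) (s + 1 - m) + bin a m * bin (-1 - a) (s - m) := by
    intro m hm
    have hm' : m ≤ s := Nat.lt_succ_iff.mp (Finset.mem_range.mp hm)
    have h1 : s + 1 - m = (s - m) + 1 := by omega
    rw [h1]
    have := bin_pascal (-a) (s - m)
    have hneg : (-a - 1 : ℝ) = -1 - a := by ring
    rw [hneg] at this
    rw [this]
    ring
  rw [Finset.sum_congr rfl key, Finset.sum_add_distrib]
  have hG : Gv a (s + 1)
      = ∑ m ∈ Finset.range (s + 1), bin a m * bin (-1 - a) (s + 1 - m)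
        + bin a (s + 1) * bin (-1 - a) 0 := by
    rw [Gv, Finset.sum_range_succ]
    simp
  rw [hG, Gv, bin_zero, bin_zero]
  ring

lemma Gv_shift (a : ℝ) (s : ℕ) : Gv (a - 1) s = Gv a s := by
  induction s with
  | zero => rw [Gv_zero, Gv_zero]
  | succ s ih =>
      have h1 := Grec1 (a - 1) s
      rw [sub_add_cancel] at h1
      have h2 := Grec2 a s
      linarith

lemma Fv_eq (a : ℝ) (r : ℕ) : Fv a r = if r = 0 then 1 else 0 := by
  cases r with
  | zero => simp [Fv, bin]
  | succ s =>
      simp only [Nat.succ_ne_zero, if_false]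
      have hs : ((s : ℝ) + 1) ≠ 0 := by positivity
      have key : ((s : ℝ) + 1) * Fv a (s + 1) = a * Gv (a - 1) s - a * Gv a s := by
        have expand : ((s : ℝ) + 1) * Fv a (s + 1)
            = ∑ m ∈ Finset.range (s + 2),
                ((m : ℝ) * bin a m * bin (-a) (s + 1 - m)
                  + bin a m * (((s + 1 - m : ℕ) : ℝ) * bin (-a) (s + 1 - m))) := by
          rw [Fv, Finset.mul_sum]
          refine Finset.sum_congr rfl fun m hm => ?_
          have hm' : m ≤ s + 1 := Nat.lt_succ_iff.mp (Finset.mem_range.mp hm)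
          have hc : ((s + 1 - m : ℕ) : ℝ) = (s : ℝ) + 1 - m := by
            push_cast [Nat.cast_sub hm']
            ring
          rw [hc]
          ring
        rw [expand, Finset.sum_add_distrib]
        have first : ∑ m ∈ Finset.range (s + 2), (m : ℝ) * bin a m * bin (-a) (s + 1 - m)
            = a * Gv (a - 1) s := by
          rw [Finset.sum_range_succ']
          simp only [Nat.cast_zero, zero_mul, add_zero]
          have : ∀ m ∈ Finset.range (s + 1),
              ((m + 1 : ℕ) : ℝ) * bin a (m + 1) * bin (-a) (s + 1 - (m + 1))
                = a * (bin (a - 1) m * bin (-1 - (a - 1)) (s - m)) := by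
            intro m hm
            have h1 : s + 1 - (m + 1) = s - m := by omega
            have h2 : (-1 - (a - 1) : ℝ) = -a := by ring
            rw [h1, h2]
            push_cast
            rw [bin_absorb]
            ring
          rw [Finset.sum_congr rfl this, ← Finset.mul_sum]
          rfl
        have second : ∑ m ∈ Finset.range (s + 2),
            bin a m * (((s + 1 - m : ℕ) : ℝ) * bin (-a) (s + 1 - m))
            = -a * Gv a s := by
          rw [Finset.sum_range_succ]
          simp only [Nat.sub_self, Nat.cast_zero, zero_mul, mul_zero, add_zero]
          have : ∀ m ∈ Finset.range (s + 1),
              bin a m * (((s + 1 - m : ℕ) : ℝ) * bin (-a) (s + 1 - m))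
                = -a * (bin a m * bin (-1 - a) (s - m)) := by
            intro m hm
            have hm' : m ≤ s := Nat.lt_succ_iff.mp (Finset.mem_range.mp hm)
            have h1 : s + 1 - m = (s - m) + 1 := by omega
            rw [h1]
            have habs := bin_absorb (-a) (s - m)
            have h2 : (-a - 1 : ℝ) = -1 - a := by ring
            rw [h2] at habs
            have hc : ((s - m + 1 : ℕ) : ℝ) = ((s - m : ℕ) : ℝ) + 1 := by push_cast; ring
            rw [hc, habs]
            ring
          rw [Finset.sum_congr rfl this, ← Finset.mul_sum]
          rfl
        rw [first, second]
        ring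
      rw [Gv_shift] at key
      have : ((s : ℝ) + 1) * Fv a (s + 1) = 0 := by rw [key]; ring
      exact (mul_eq_zero.mp this).resolve_left hs

lemma gamma_fact (τ : ℝ) (hτ : ∀ z : ℤ, τ ≠ (z : ℝ)) (m : ℕ) :
    Real.Gamma (τ + 1) = bin τ m * (m.factorial : ℝ) * Real.Gamma (τ - m + 1) := by
  induction m with
  | zero => simp [bin]
  | succ m ih =>
      have hne : (τ - m : ℝ) ≠ 0 := by
        intro h
        exact hτ m (by push_cast; linarith)
      have h1 : (τ - m + 1 : ℝ) = (τ - m) + 1 := by ring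
      have h2 : Real.Gamma (τ - m + 1) = (τ - m) * Real.Gamma (τ - m) := by
        rw [h1, Real.Gamma_add_one hne]
      have h3 : (τ - (m : ℝ)) = τ - ((m : ℕ) + 1 : ℕ) + 1 := by push_cast; ring
      rw [ih, h2]
      rw [bin_succ]
      have hfac : ((m + 1).factorial : ℝ) = ((m : ℝ) + 1) * (m.factorial : ℝ) := by
        rw [Nat.factorial_succ]; push_cast; ring
      rw [hfac, ← h3]
      have hm1 : ((m : ℝ) + 1) ≠ 0 := by positivity
      field_simp

lemma gamma_ne (τ : ℝ) (hτ : ∀ z : ℤ, τ ≠ (z : ℝ)) (m : ℕ) :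
    Real.Gamma (τ - m + 1) ≠ 0 := by
  apply Real.Gamma_ne_zero
  intro n h
  exact hτ ((m : ℤ) - 1 - n) (by push_cast; linarith)

lemma gamma_div (τ : ℝ) (hτ : ∀ z : ℤ, τ ≠ (z : ℝ)) (m : ℕ) :
    Real.Gamma (τ + 1) / ((m.factorial : ℝ) * Real.Gamma (τ - m + 1)) = bin τ m := by
  rw [gamma_fact τ hτ m]
  have h1 : (m.factorial : ℝ) ≠ 0 := Nat.cast_ne_zero.mpr m.factorial_ne_zero
  have h2 := gamma_ne τ hτ m
  field_simp

lemma Phat_eq (τ : ℝ) (hτ : ∀ z : ℤ, τ ≠ (z : ℝ)) {n k : ℕ} (hkn : k ≤ n) :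
    Phat τ n k = ∑ i ∈ Finset.Icc k n, (-1 : ℝ) ^ (i - k) * (n.choose i : ℝ) * bin τ (i - k) := by
  rw [Phat, if_pos hkn]
  refine Finset.sum_congr rfl fun i hi => ?_
  obtain ⟨hki, hin⟩ := Finset.mem_Icc.mp hi
  have hsymm : (n.choose (n - i) : ℝ) = (n.choose i : ℝ) := by
    rw [Nat.choose_symm hin]
  have harg : τ - (i : ℝ) + (k : ℝ) + 1 = τ - ((i - k : ℕ) : ℝ) + 1 := by
    rw [Nat.cast_sub hki]; ring
  rw [hsymm, harg, mul_div_assoc, gamma_div τ hτ (i - k)]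

lemma Bmat_eq (τ : ℝ) (hτ : ∀ z : ℤ, τ ≠ (z : ℝ)) {n k : ℕ} (hkn : k ≤ n) :
    Bmat τ n k = ∑ j ∈ Finset.Icc k n, (-1 : ℝ) ^ (n - k) * (j.choose k : ℝ) * bin (-τ) (n - j) := by
  have hτ' : ∀ z : ℤ, (-τ : ℝ) ≠ (z : ℝ) := by
    intro z h
    exact hτ (-z) (by push_cast; linarith)
  rw [Bmat, if_pos hkn]
  refine Finset.sum_congr rfl fun j hj => ?_
  obtain ⟨hkj, hjn⟩ := Finset.mem_Icc.mp hj
  have hsymm : (j.choose (j - k) : ℝ) = (j.choose k : ℝ) := by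
    rw [Nat.choose_symm hkj]
  have harg : -τ - (n : ℝ) + (j : ℝ) + 1 = -τ - ((n - j : ℕ) : ℝ) + 1 := by
    rw [Nat.cast_sub hjn]; ring
  rw [hsymm, harg, mul_div_assoc, gamma_div (-τ) hτ' (n - j)]

lemma alt_sum_choose_real (n : ℕ) :
    ∑ i ∈ Finset.range (n + 1), (-1 : ℝ) ^ i * (n.choose i : ℝ)
      = if n = 0 then 1 else 0 := by
  have h := @Int.alternating_sum_range_choose n
  have h2 := congrArg (fun z : ℤ => (z : ℝ)) h
  push_cast at h2
  simpa using h2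


lemma PB (τ : ℝ) (hτ : ∀ z : ℤ, τ ≠ (z : ℝ)) (n k : ℕ) :
    ∑ j ∈ Finset.range (n + 1), Phat τ n j * Bmat τ j k = if n = k then 1 else 0 := by
  by_cases hk : k ≤ n
  · set A1 : Matrix (Fin (n + 1)) (Fin (n + 1)) ℝ :=
      Matrix.of fun i l => if (l : ℕ) ≤ (i : ℕ) then ((i : ℕ).choose (l : ℕ) : ℝ) else 0 with hA1
    set A2 : Matrix (Fin (n + 1)) (Fin (n + 1)) ℝ :=
      Matrix.of fun i j => if (j : ℕ) ≤ (i : ℕ) then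
        (-1 : ℝ) ^ ((i : ℕ) - (j : ℕ)) * bin τ ((i : ℕ) - (j : ℕ)) else 0 with hA2
    set A3 : Matrix (Fin (n + 1)) (Fin (n + 1)) ℝ :=
      Matrix.of fun j l => if (l : ℕ) ≤ (j : ℕ) then
        (-1 : ℝ) ^ ((j : ℕ) - (l : ℕ)) * bin (-τ) ((j : ℕ) - (l : ℕ)) else 0 with hA3
    set A4 : Matrix (Fin (n + 1)) (Fin (n + 1)) ℝ :=
      Matrix.of fun l m => if (m : ℕ) ≤ (l : ℕ) then
        (-1 : ℝ) ^ ((l : ℕ) - (m : ℕ)) * ((l : ℕ).choose (m : ℕ) : ℝ) else 0 with hA4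
    have h12 : ∀ i j : Fin (n + 1), (A1 * A2) i j = Phat τ (i : ℕ) (j : ℕ) := by
      intro i j
      rw [Matrix.mul_apply]
      have hconv : ∑ l : Fin (n + 1), A1 i l * A2 l j
          = ∑ l ∈ Finset.range (n + 1),
              ((if l ≤ (i : ℕ) then ((i : ℕ).choose l : ℝ) else 0) *
                (if (j : ℕ) ≤ l then (-1 : ℝ) ^ (l - (j : ℕ)) * bin τ (l - (j : ℕ)) else 0)) := by
        rw [← Fin.sum_univ_eq_sum_range (fun l =>
          (if l ≤ (i : ℕ) then ((i : ℕ).choose l : ℝ) else 0) *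
            (if (j : ℕ) ≤ l then (-1 : ℝ) ^ (l - (j : ℕ)) * bin τ (l - (j : ℕ)) else 0)) (n + 1)]
        rfl
      rw [hconv]
      by_cases hj : (j : ℕ) ≤ (i : ℕ)
      · rw [Phat_eq τ hτ hj]
        rw [← Finset.sum_subset (show Finset.Icc (j : ℕ) (i : ℕ) ⊆ Finset.range (n + 1) by
            intro t ht
            rw [Finset.mem_Icc] at ht
            exact Finset.mem_range.mpr (lt_of_le_of_lt ht.2 i.isLt))]
        · refine Finset.sum_congr rfl fun l hl => ?_
          obtain ⟨hjl, hli⟩ := Finset.mem_Icc.mp hl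
          rw [if_pos hli, if_pos hjl]
          ring
        · intro l _ hl
          rw [Finset.mem_Icc] at hl
          rcases Nat.lt_or_ge (i : ℕ) l with h | h
          · rw [if_neg (show ¬ l ≤ (i : ℕ) by omega), zero_mul]
          · rw [if_neg (show ¬ (j : ℕ) ≤ l by omega), mul_zero]
      · rw [Phat, if_neg hj]
        refine Finset.sum_eq_zero fun l _ => ?_
        rcases Nat.lt_or_ge (i : ℕ) l with h | h
        · rw [if_neg (show ¬ l ≤ (i : ℕ) by omega), zero_mul]
        · rw [if_neg (show ¬ (j : ℕ) ≤ l by omega), mul_zero]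
    have h34 : ∀ j m : Fin (n + 1), (A3 * A4) j m = Bmat τ (j : ℕ) (m : ℕ) := by
      intro j m
      rw [Matrix.mul_apply]
      have hconv : ∑ l : Fin (n + 1), A3 j l * A4 l m
          = ∑ l ∈ Finset.range (n + 1),
              ((if l ≤ (j : ℕ) then (-1 : ℝ) ^ ((j : ℕ) - l) * bin (-τ) ((j : ℕ) - l) else 0) *
                (if (m : ℕ) ≤ l then (-1 : ℝ) ^ (l - (m : ℕ)) * (l.choose (m : ℕ) : ℝ) else 0)) := by
        rw [← Fin.sum_univ_eq_sum_range (fun l =>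
          (if l ≤ (j : ℕ) then (-1 : ℝ) ^ ((j : ℕ) - l) * bin (-τ) ((j : ℕ) - l) else 0) *
            (if (m : ℕ) ≤ l then (-1 : ℝ) ^ (l - (m : ℕ)) * (l.choose (m : ℕ) : ℝ) else 0)) (n + 1)]
        rfl
      rw [hconv]
      by_cases hm : (m : ℕ) ≤ (j : ℕ)
      · rw [Bmat_eq τ hτ hm]
        rw [← Finset.sum_subset (show Finset.Icc (m : ℕ) (j : ℕ) ⊆ Finset.range (n + 1) by
            intro t ht
            rw [Finset.mem_Icc] at ht
            exact Finset.mem_range.mpr (lt_of_le_of_lt ht.2 j.isLt))]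
        · refine Finset.sum_congr rfl fun l hl => ?_
          obtain ⟨hml, hlj⟩ := Finset.mem_Icc.mp hl
          rw [if_pos hlj, if_pos hml]
          have hsign : (-1 : ℝ) ^ ((j : ℕ) - l) * (-1 : ℝ) ^ (l - (m : ℕ))
              = (-1 : ℝ) ^ ((j : ℕ) - (m : ℕ)) := by
            rw [← pow_add, tsub_add_tsub_cancel hlj hml]
          calc ((-1 : ℝ) ^ ((j : ℕ) - l) * bin (-τ) ((j : ℕ) - l)) *
                ((-1 : ℝ) ^ (l - (m : ℕ)) * (l.choose (m : ℕ) : ℝ))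
              = ((-1 : ℝ) ^ ((j : ℕ) - l) * (-1 : ℝ) ^ (l - (m : ℕ))) *
                  (l.choose (m : ℕ) : ℝ) * bin (-τ) ((j : ℕ) - l) := by ring
            _ = _ := by rw [hsign]
        · intro l _ hl
          rw [Finset.mem_Icc] at hl
          rcases Nat.lt_or_ge (j : ℕ) l with h | h
          · rw [if_neg (show ¬ l ≤ (j : ℕ) by omega), zero_mul]
          · rw [if_neg (show ¬ (m : ℕ) ≤ l by omega), mul_zero]
      · rw [Bmat, if_neg hm]
        refine Finset.sum_eq_zero fun l _ => ?_
        rcases Nat.lt_or_ge (j : ℕ) l with h | h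
        · rw [if_neg (show ¬ l ≤ (j : ℕ) by omega), zero_mul]
        · rw [if_neg (show ¬ (m : ℕ) ≤ l by omega), mul_zero]
    have h23 : A2 * A3 = 1 := by
      ext i l
      rw [Matrix.mul_apply]
      have hconv : ∑ j : Fin (n + 1), A2 i j * A3 j l
          = ∑ j ∈ Finset.range (n + 1),
              ((if j ≤ (i : ℕ) then (-1 : ℝ) ^ ((i : ℕ) - j) * bin τ ((i : ℕ) - j) else 0) *
                (if (l : ℕ) ≤ j then (-1 : ℝ) ^ (j - (l : ℕ)) * bin (-τ) (j - (l : ℕ)) else 0)) := by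
        rw [← Fin.sum_univ_eq_sum_range (fun j =>
          (if j ≤ (i : ℕ) then (-1 : ℝ) ^ ((i : ℕ) - j) * bin τ ((i : ℕ) - j) else 0) *
            (if (l : ℕ) ≤ j then (-1 : ℝ) ^ (j - (l : ℕ)) * bin (-τ) (j - (l : ℕ)) else 0)) (n + 1)]
        rfl
      rw [hconv]
      by_cases hl : (l : ℕ) ≤ (i : ℕ)
      · have hstep : ∑ j ∈ Finset.range (n + 1),
            ((if j ≤ (i : ℕ) then (-1 : ℝ) ^ ((i : ℕ) - j) * bin τ ((i : ℕ) - j) else 0) *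
              (if (l : ℕ) ≤ j then (-1 : ℝ) ^ (j - (l : ℕ)) * bin (-τ) (j - (l : ℕ)) else 0))
            = ∑ j ∈ Finset.Icc (l : ℕ) (i : ℕ),
                (-1 : ℝ) ^ ((i : ℕ) - (l : ℕ)) *
                  (bin (-τ) (j - (l : ℕ)) * bin τ ((i : ℕ) - j)) := by
          rw [← Finset.sum_subset (show Finset.Icc (l : ℕ) (i : ℕ) ⊆ Finset.range (n + 1) by
              intro t ht
              rw [Finset.mem_Icc] at ht
              exact Finset.mem_range.mpr (lt_of_le_of_lt ht.2 i.isLt))]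
          · refine Finset.sum_congr rfl fun j hj => ?_
            obtain ⟨hlj, hji⟩ := Finset.mem_Icc.mp hj
            rw [if_pos hji, if_pos hlj]
            have hsign : (-1 : ℝ) ^ ((i : ℕ) - j) * (-1 : ℝ) ^ (j - (l : ℕ))
                = (-1 : ℝ) ^ ((i : ℕ) - (l : ℕ)) := by
              rw [← pow_add, tsub_add_tsub_cancel hji hlj]
            calc ((-1 : ℝ) ^ ((i : ℕ) - j) * bin τ ((i : ℕ) - j)) *
                  ((-1 : ℝ) ^ (j - (l : ℕ)) * bin (-τ) (j - (l : ℕ)))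
                = ((-1 : ℝ) ^ ((i : ℕ) - j) * (-1 : ℝ) ^ (j - (l : ℕ))) *
                    (bin (-τ) (j - (l : ℕ)) * bin τ ((i : ℕ) - j)) := by ring
              _ = _ := by rw [hsign]
          · intro j _ hj
            rw [Finset.mem_Icc] at hj
            rcases Nat.lt_or_ge (i : ℕ) j with h | h
            · rw [if_neg (show ¬ j ≤ (i : ℕ) by omega), zero_mul]
            · rw [if_neg (show ¬ (l : ℕ) ≤ j by omega), mul_zero]
        rw [hstep, ← Finset.mul_sum]
        have hreindex : ∑ j ∈ Finset.Icc (l : ℕ) (i : ℕ),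
            bin (-τ) (j - (l : ℕ)) * bin τ ((i : ℕ) - j)
            = Fv (-τ) ((i : ℕ) - (l : ℕ)) := by
          rw [← Finset.Ico_add_one_right_eq_Icc, Finset.sum_Ico_eq_sum_range, Fv]
          have hlen : (i : ℕ) + 1 - (l : ℕ) = ((i : ℕ) - (l : ℕ)) + 1 := by omega
          rw [hlen]
          refine Finset.sum_congr rfl fun m hm => ?_
          have hm' : m ≤ (i : ℕ) - (l : ℕ) := Nat.lt_succ_iff.mp (Finset.mem_range.mp hm)
          have e1 : (l : ℕ) + m - (l : ℕ) = m := by omega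
          have e2 : (i : ℕ) - ((l : ℕ) + m) = (i : ℕ) - (l : ℕ) - m := by omega
          rw [e1, e2, neg_neg]
        rw [hreindex, Fv_eq]
        rw [Matrix.one_apply]
        by_cases hil : i = l
        · subst hil
          simp
        · have hne : (i : ℕ) - (l : ℕ) ≠ 0 := by
            have : (i : ℕ) ≠ (l : ℕ) := fun h => hil (Fin.ext h)
            omega
          rw [if_neg hne, if_neg hil, mul_zero]
      · have hz : ∑ j ∈ Finset.range (n + 1),
            ((if j ≤ (i : ℕ) then (-1 : ℝ) ^ ((i : ℕ) - j) * bin τ ((i : ℕ) - j) else 0) *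
              (if (l : ℕ) ≤ j then (-1 : ℝ) ^ (j - (l : ℕ)) * bin (-τ) (j - (l : ℕ)) else 0))
            = 0 := by
          refine Finset.sum_eq_zero fun j _ => ?_
          rcases Nat.lt_or_ge (i : ℕ) j with h | h
          · rw [if_neg (show ¬ j ≤ (i : ℕ) by omega), zero_mul]
          · rw [if_neg (show ¬ (l : ℕ) ≤ j by omega), mul_zero]
        rw [hz, Matrix.one_apply, if_neg (fun h => hl (by rw [h]))]
    have h14 : A1 * A4 = 1 := by
      ext i m
      rw [Matrix.mul_apply]
      have hconv : ∑ l : Fin (n + 1), A1 i l * A4 l m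
          = ∑ l ∈ Finset.range (n + 1),
              ((if l ≤ (i : ℕ) then ((i : ℕ).choose l : ℝ) else 0) *
                (if (m : ℕ) ≤ l then (-1 : ℝ) ^ (l - (m : ℕ)) * (l.choose (m : ℕ) : ℝ) else 0)) := by
        rw [← Fin.sum_univ_eq_sum_range (fun l =>
          (if l ≤ (i : ℕ) then ((i : ℕ).choose l : ℝ) else 0) *
            (if (m : ℕ) ≤ l then (-1 : ℝ) ^ (l - (m : ℕ)) * (l.choose (m : ℕ) : ℝ) else 0)) (n + 1)]
        rfl
      rw [hconv]
      by_cases hm : (m : ℕ) ≤ (i : ℕ)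
      · have hstep : ∑ l ∈ Finset.range (n + 1),
            ((if l ≤ (i : ℕ) then ((i : ℕ).choose l : ℝ) else 0) *
              (if (m : ℕ) ≤ l then (-1 : ℝ) ^ (l - (m : ℕ)) * (l.choose (m : ℕ) : ℝ) else 0))
            = ∑ l ∈ Finset.Icc (m : ℕ) (i : ℕ),
                ((i : ℕ).choose (m : ℕ) : ℝ) *
                  ((-1 : ℝ) ^ (l - (m : ℕ)) * (((i : ℕ) - (m : ℕ)).choose (l - (m : ℕ)) : ℝ)) := by
          rw [← Finset.sum_subset (show Finset.Icc (m : ℕ) (i : ℕ) ⊆ Finset.range (n + 1) by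
              intro t ht
              rw [Finset.mem_Icc] at ht
              exact Finset.mem_range.mpr (lt_of_le_of_lt ht.2 i.isLt))]
          · refine Finset.sum_congr rfl fun l hl => ?_
            obtain ⟨hml, hli⟩ := Finset.mem_Icc.mp hl
            rw [if_pos hli, if_pos hml]
            have hcm := Nat.choose_mul (n := (i : ℕ)) hml
            have hcm' : ((i : ℕ).choose l : ℝ) * (l.choose (m : ℕ) : ℝ)
                = ((i : ℕ).choose (m : ℕ) : ℝ)
                    * (((i : ℕ) - (m : ℕ)).choose (l - (m : ℕ)) : ℝ) := by
              exact_mod_cast congrArg (fun t : ℕ => (t : ℝ)) hcm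
            calc ((i : ℕ).choose l : ℝ) *
                  ((-1 : ℝ) ^ (l - (m : ℕ)) * (l.choose (m : ℕ) : ℝ))
                = (((i : ℕ).choose l : ℝ) * (l.choose (m : ℕ) : ℝ)) *
                    (-1 : ℝ) ^ (l - (m : ℕ)) := by ring
              _ = _ := by rw [hcm']; ring
          · intro l _ hl
            rw [Finset.mem_Icc] at hl
            rcases Nat.lt_or_ge (i : ℕ) l with h | h
            · rw [if_neg (show ¬ l ≤ (i : ℕ) by omega), zero_mul]
            · rw [if_neg (show ¬ (m : ℕ) ≤ l by omega), mul_zero]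
        rw [hstep, ← Finset.mul_sum]
        have hreindex : ∑ l ∈ Finset.Icc (m : ℕ) (i : ℕ),
            ((-1 : ℝ) ^ (l - (m : ℕ)) * (((i : ℕ) - (m : ℕ)).choose (l - (m : ℕ)) : ℝ))
            = ∑ t ∈ Finset.range (((i : ℕ) - (m : ℕ)) + 1),
                (-1 : ℝ) ^ t * (((i : ℕ) - (m : ℕ)).choose t : ℝ) := by
          rw [← Finset.Ico_add_one_right_eq_Icc, Finset.sum_Ico_eq_sum_range]
          have hlen : (i : ℕ) + 1 - (m : ℕ) = ((i : ℕ) - (m : ℕ)) + 1 := by omega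
          rw [hlen]
          refine Finset.sum_congr rfl fun t _ => ?_
          have e1 : (m : ℕ) + t - (m : ℕ) = t := by omega
          rw [e1]
        rw [hreindex, alt_sum_choose_real, Matrix.one_apply]
        by_cases him : i = m
        · subst him
          simp
        · have hne : (i : ℕ) - (m : ℕ) ≠ 0 := by
            have : (i : ℕ) ≠ (m : ℕ) := fun h => him (Fin.ext h)
            omega
          rw [if_neg hne, if_neg him, mul_zero]
      · have hz : ∑ l ∈ Finset.range (n + 1),
            ((if l ≤ (i : ℕ) then ((i : ℕ).choose l : ℝ) else 0) *
              (if (m : ℕ) ≤ l then (-1 : ℝ) ^ (l - (m : ℕ)) * (l.choose (m : ℕ) : ℝ) else 0))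
            = 0 := by
          refine Finset.sum_eq_zero fun l _ => ?_
          rcases Nat.lt_or_ge (i : ℕ) l with h | h
          · rw [if_neg (show ¬ l ≤ (i : ℕ) by omega), zero_mul]
          · rw [if_neg (show ¬ (m : ℕ) ≤ l by omega), mul_zero]
        rw [hz, Matrix.one_apply, if_neg (fun h => hm (by rw [h]))]
    have hprod : (A1 * A2) * (A3 * A4) = 1 := by
      calc (A1 * A2) * (A3 * A4) = A1 * ((A2 * A3) * A4) := by
            rw [Matrix.mul_assoc, Matrix.mul_assoc]
        _ = A1 * A4 := by rw [h23, Matrix.one_mul]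
        _ = 1 := h14
    have hn : n < n + 1 := Nat.lt_succ_self n
    have hk' : k < n + 1 := Nat.lt_succ_of_le hk
    have hentry := congrFun (congrFun hprod (⟨n, hn⟩ : Fin (n + 1))) (⟨k, hk'⟩ : Fin (n + 1))
    rw [Matrix.mul_apply] at hentry
    have hsum : ∑ j : Fin (n + 1), (A1 * A2) ⟨n, hn⟩ j * (A3 * A4) j ⟨k, hk'⟩
        = ∑ j ∈ Finset.range (n + 1), Phat τ n j * Bmat τ j k := by
      rw [← Fin.sum_univ_eq_sum_range (fun j => Phat τ n j * Bmat τ j k) (n + 1)]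
      refine Finset.sum_congr rfl fun j _ => ?_
      rw [h12, h34]
    rw [hsum] at hentry
    rw [hentry, Matrix.one_apply]
    by_cases hnk : n = k
    · subst hnk
      simp
    · rw [if_neg (show (⟨n, hn⟩ : Fin (n + 1)) ≠ ⟨k, hk'⟩ from
        fun h => hnk (by injection h)), if_neg hnk]
  · have hz : ∑ j ∈ Finset.range (n + 1), Phat τ n j * Bmat τ j k = 0 := by
      refine Finset.sum_eq_zero fun j hj => ?_
      have : ¬ k ≤ j := by
        have := Finset.mem_range.mp hj
        omega
      rw [Bmat, if_neg this, mul_zero]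
    rw [hz, if_neg (fun h => hk (le_of_eq h.symm))]

lemma PhatT_partial (τ : ℝ) (hτ : ∀ z : ℤ, τ ≠ (z : ℝ)) (c : ℕ → ℝ) (r n : ℕ) :
    PhatT τ (fun m => ∑ k ∈ Finset.range (r + 1), c k * Bmat τ m k) n
      = if n ≤ r then c n else 0 := by
  rw [PhatT]
  have hswap : ∑ j ∈ Finset.range (n + 1),
      Phat τ n j * ∑ k ∈ Finset.range (r + 1), c k * Bmat τ j k
      = ∑ k ∈ Finset.range (r + 1), c k *
          ∑ j ∈ Finset.range (n + 1), Phat τ n j * Bmat τ j k := by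
    simp_rw [Finset.mul_sum]
    rw [Finset.sum_comm]
    refine Finset.sum_congr rfl fun k _ => Finset.sum_congr rfl fun j _ => by ring
  rw [hswap]
  have : ∀ k ∈ Finset.range (r + 1),
      c k * ∑ j ∈ Finset.range (n + 1), Phat τ n j * Bmat τ j k
        = if n = k then c k else 0 := by
    intro k _
    rw [PB τ hτ n k]
    by_cases h : n = k
    · rw [if_pos h, if_pos h, mul_one]
    · rw [if_neg h, if_neg h, mul_zero]
  rw [Finset.sum_congr rfl this, Finset.sum_ite_eq]
  simp [Nat.lt_succ_iff]

lemma PhatT_sub (τ : ℝ) (x y : ℕ → ℝ) (n : ℕ) :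
    PhatT τ (x - y) n = PhatT τ x n - PhatT τ y n := by
  simp [PhatT, mul_sub, Finset.sum_sub_distrib]

lemma PhatT_residual (τ : ℝ) (hτ : ∀ z : ℤ, τ ≠ (z : ℝ)) (x : ℕ → ℝ) (c : ℕ → ℝ) (r n : ℕ) :
    PhatT τ (x - fun m => ∑ k ∈ Finset.range (r + 1), c k * Bmat τ m k) n
      = PhatT τ x n - if n ≤ r then c n else 0 := by
  rw [PhatT_sub, PhatT_partial τ hτ c r n]

/-- for `1 ≤ p < ∞`, the sequences `b^(k)_n = B_{nk}` form a
Schauder basis of `ℓ_p(P̂)`: every `x ∈ ℓ_p(P̂)` is the norm-limit of the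
partial sums `Σ_{k=0}^r (P̂x)_k b^(k)`, and the coefficients are unique. -/
theorem lpPhat_schauder_basis (τ : ℝ) (hτ : ∀ z : ℤ, τ ≠ (z : ℝ))
    (p : ℝ) (hp : 1 ≤ p) (x : ℕ → ℝ) (hx : x ∈ lpPhatSet τ p) :
    Filter.Tendsto
      (fun r => lpPhatNorm τ p
        (x - fun n => ∑ k ∈ Finset.range (r + 1), PhatT τ x k * Bmat τ n k))
      Filter.atTop (nhds 0) ∧
    ∀ η : ℕ → ℝ,
      Filter.Tendsto
        (fun r => lpPhatNorm τ p
          (x - fun n => ∑ k ∈ Finset.range (r + 1), η k * Bmat τ n k))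
        Filter.atTop (nhds 0) →
      ∀ k, η k = PhatT τ x k := by
  have hp0 : p ≠ 0 := by linarith
  have hip : (0 : ℝ) ≤ 1 / p := by positivity
  set μ : ℕ → ℝ := PhatT τ x with hμ
  set f : ℕ → ℝ := fun n => |μ n| ^ p with hf
  have hxf : Summable f := hx
  have hfnn : ∀ n, 0 ≤ f n := fun n => Real.rpow_nonneg (abs_nonneg _) p
  -- general description of the residual p-th powers
  have hres : ∀ (c : ℕ → ℝ) (r n : ℕ),
      |PhatT τ (x - fun m => ∑ k ∈ Finset.range (r + 1), c k * Bmat τ m k) n| ^ p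
        = |μ n - if n ≤ r then c n else 0| ^ p := by
    intro c r n
    rw [PhatT_residual τ hτ x c r n]
  constructor
  · -- convergence of the canonical expansion
    have hnorm : ∀ r, lpPhatNorm τ p
        (x - fun n => ∑ k ∈ Finset.range (r + 1), μ k * Bmat τ n k)
        = (∑' n, f (n + (r + 1))) ^ (1 / p) := by
      intro r
      rw [lpPhatNorm]
      congr 1
      have hterm : ∀ n,
          |PhatT τ (x - fun m => ∑ k ∈ Finset.range (r + 1), μ k * Bmat τ m k) n| ^ p
            = if n ≤ r then 0 else f n := by
        intro n
        rw [hres μ r n]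
        by_cases h : n ≤ r
        · rw [if_pos h, if_pos h, sub_self, abs_zero, Real.zero_rpow hp0]
        · rw [if_neg h, if_neg h, sub_zero]
      rw [tsum_congr hterm]
      set g : ℕ → ℝ := fun n => if n ≤ r then 0 else f n with hg
      have hgs : Summable g := by
        refine Summable.of_nonneg_of_le (fun n => ?_) (fun n => ?_) hxf
        · by_cases h : n ≤ r <;> simp [hg, h, hfnn n]
        · by_cases h : n ≤ r <;> simp [hg, h, hfnn n]
      have hsplit := (hgs.sum_add_tsum_nat_add (r + 1)).symm
      have hzero : ∑ i ∈ Finset.range (r + 1), g i = 0 := by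
        refine Finset.sum_eq_zero fun i hi => ?_
        have : i ≤ r := Nat.lt_succ_iff.mp (Finset.mem_range.mp hi)
        simp [hg, this]
      have htail : ∀ n, g (n + (r + 1)) = f (n + (r + 1)) := by
        intro n
        have : ¬ n + (r + 1) ≤ r := by omega
        simp [hg, this]
      rw [hsplit, hzero, zero_add, tsum_congr htail]
    have h1 : Filter.Tendsto (fun i => ∑' k, f (k + i)) Filter.atTop (nhds 0) :=
      tendsto_sum_nat_add f
    have h2 : Filter.Tendsto (fun r : ℕ => ∑' n, f (n + (r + 1))) Filter.atTop (nhds 0) :=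
      h1.comp (tendsto_add_atTop_nat 1)
    have h3 : Filter.Tendsto (fun r : ℕ => (∑' n, f (n + (r + 1))) ^ (1 / p))
        Filter.atTop (nhds 0) := by
      have := h2.rpow_const (p := 1 / p) (Or.inr hip)
      rwa [Real.zero_rpow (one_div_ne_zero hp0)] at this
    exact h3.congr fun r => (hnorm r).symm
  · -- uniqueness
    intro η htend k
    have key : ∀ r, k ≤ r → |μ k - η k| ≤ lpPhatNorm τ p
        (x - fun n => ∑ j ∈ Finset.range (r + 1), η j * Bmat τ n j) := by
      intro r hkr
      set h : ℕ → ℝ := fun n =>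
        |PhatT τ (x - fun m => ∑ j ∈ Finset.range (r + 1), η j * Bmat τ m j) n| ^ p with hh
      have hhn : ∀ n, 0 ≤ h n := fun n => Real.rpow_nonneg (abs_nonneg _) p
      have hhs : Summable h := by
        refine (summable_nat_add_iff (r + 1)).mp ?_
        have : (fun n => h (n + (r + 1))) = fun n => f (n + (r + 1)) := by
          funext n
          rw [hh]
          simp only []
          rw [hres η r (n + (r + 1))]
          have : ¬ n + (r + 1) ≤ r := by omega
          rw [if_neg this, sub_zero]
        rw [this]
        exact (summable_nat_add_iff (r + 1)).mpr hxf
      have hk : h k = |μ k - η k| ^ p := by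
        rw [hh]
        simp only []
        rw [hres η r k, if_pos hkr]
      have hle : h k ≤ ∑' n, h n := hhs.le_tsum k fun j _ => hhn j
      have hmono : (h k) ^ (1 / p) ≤ (∑' n, h n) ^ (1 / p) :=
        Real.rpow_le_rpow (hhn k) hle hip
      have hsimp : (h k) ^ (1 / p) = |μ k - η k| := by
        rw [hk, ← Real.rpow_mul (abs_nonneg _), mul_one_div_cancel hp0, Real.rpow_one]
      rw [lpPhatNorm]
      calc |μ k - η k| = (h k) ^ (1 / p) := hsimp.symm
        _ ≤ (∑' n, h n) ^ (1 / p) := hmono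
    have hev : ∀ᶠ r in Filter.atTop, |μ k - η k| ≤ lpPhatNorm τ p
        (x - fun n => ∑ j ∈ Finset.range (r + 1), η j * Bmat τ n j) :=
      Filter.eventually_atTop.mpr ⟨k, key⟩
    have hle0 : |μ k - η k| ≤ 0 := ge_of_tendsto htend hev
    have : μ k - η k = 0 := abs_eq_zero.mp (le_antisymm hle0 (abs_nonneg _))
    rw [hμ] at this
    linarith [this]
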